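/- Let λ < -1/4 be such that λ ∈ B. Then there exists an integer n ≥ 1 such that the hard-core partition function of the path with n vertices is zero, i.e., Z_{P_n}(λ) = 0. -/

import Mathlib

/-!
Deleting the last vertex of a path gives `Z_{P_{n+2}} = Z_{P_{n+1}} + λ Z_{P_n}`. For
`λ = -1/(4 cos² θ)` this is, after rescaling by `(2 cos θ)^{n+1}`, the recurrence of the
Chebyshev polynomials of the second kind, so `Z_{P_n}(λ) (2 cos θ)^{n+1} sin θ = sin((n+2)θ)`.
If `θ = (a/b)π` in lowest terms with `0 < θ < π/2`, then `b ≥ 3` and `sin(bθ) = 0`, so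
`Z_{P_{b-2}}(λ) = 0`.
-/

open scoped Classical

/-- The set of independent sets of a finite simple graph `G`, as a `Finset` of `Finset`s
(including the empty set). -/
noncomputable def indepFinsets {V : Type*} [Fintype V] (G : SimpleGraph V) : Finset (Finset V) :=
  Finset.univ.filter fun I => ∀ u ∈ I, ∀ w ∈ I, ¬ G.Adj u w

/-- The hard-core partition function `Z_G(λ) = ∑_{I ∈ I_G} λ^{|I|}`. -/
noncomputable def hcZ {V : Type*} [Fintype V] (G : SimpleGraph V) (lam : ℝ) : ℝ :=
  ∑ I ∈ indepFinsets G, lam ^ I.card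

/-- `Z^{in}_{G,v}(λ)`: contribution of independent sets containing `v`. -/
noncomputable def hcZin {V : Type*} [Fintype V] (G : SimpleGraph V) (v : V) (lam : ℝ) : ℝ :=
  ∑ I ∈ (indepFinsets G).filter (fun I => v ∈ I), lam ^ I.card

/-- `Z^{out}_{G,v}(λ)`: contribution of independent sets not containing `v`. -/
noncomputable def hcZout {V : Type*} [Fintype V] (G : SimpleGraph V) (v : V) (lam : ℝ) : ℝ :=
  ∑ I ∈ (indepFinsets G).filter (fun I => v ∉ I), lam ^ I.card

/-- The "bad" set `B`: reals `λ` of the form `-1/(4 cos² θ)` for some `θ ∈ (0, π/2)`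
which is a rational multiple of `π`. -/
def badSet : Set ℝ :=
  {lam | ∃ θ : ℝ, θ ∈ Set.Ioo 0 (Real.pi / 2) ∧ (∃ q : ℚ, θ = (q : ℝ) * Real.pi) ∧
    lam = -1 / (4 * (Real.cos θ) ^ 2)}

open Finset SimpleGraph Polynomial Polynomial.Chebyshev Real

section IndependentSets

variable {V W : Type*} [Fintype V] [Fintype W] {G : SimpleGraph V} {H : SimpleGraph W}

@[simp]
theorem mem_indepFinsets {I : Finset V} :
    I ∈ indepFinsets G ↔ ∀ u ∈ I, ∀ w ∈ I, ¬ G.Adj u w := by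
  simp [indepFinsets]

theorem map_mem_indepFinsets_iff (f : G ↪g H) {I : Finset V} :
    I.map f.toEmbedding ∈ indepFinsets H ↔ I ∈ indepFinsets G := by
  simp

theorem hcZ_eq_hcZout_add_hcZin (v : V) (lam : ℝ) :
    hcZ G lam = hcZout G v lam + hcZin G v lam :=
  (sum_filter_not_add_sum_filter _ _ _).symm

theorem sum_indepFinsets_subset_map (f : G ↪g H) (lam : ℝ) :
    ∑ J ∈ (indepFinsets H).filter (· ⊆ univ.map f.toEmbedding), lam ^ J.card = hcZ G lam := by
  have himage : (indepFinsets H).filter (· ⊆ univ.map f.toEmbedding)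
      = (indepFinsets G).map (mapEmbedding f.toEmbedding).toEmbedding := by
    ext J
    simp only [mem_filter, subset_map_iff, subset_univ, true_and, mem_map,
      RelEmbedding.coe_toEmbedding, mapEmbedding_apply]
    constructor
    · rintro ⟨hJ, I, rfl⟩
      exact ⟨I, (map_mem_indepFinsets_iff f).1 hJ, rfl⟩
    · rintro ⟨I, hI, rfl⟩
      exact ⟨(map_mem_indepFinsets_iff f).2 hI, I, rfl⟩
  rw [himage, sum_map]
  simp [hcZ]

theorem hcZin_eq_mul_sum_filter (v : V) (lam : ℝ) :
    hcZin G v lam = lam * ∑ J ∈ (indepFinsets G).filter (fun J => ∀ u ∈ J, u ≠ v ∧ ¬ G.Adj v u),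
      lam ^ J.card := by
  rw [hcZin, mul_sum]
  refine sum_nbij' (fun I => I.erase v) (insert v) ?_ ?_ ?_ ?_ ?_
  · simp only [mem_filter, mem_indepFinsets, mem_erase]
    rintro I ⟨hI, hv⟩
    exact ⟨fun u hu w hw => hI u hu.2 w hw.2, fun u hu => ⟨hu.1, hI v hv u hu.2⟩⟩
  · simp only [mem_filter, mem_indepFinsets, mem_insert]
    rintro J ⟨hJ, hnbr⟩
    refine ⟨?_, .inl trivial⟩
    rintro u (rfl | hu) w (rfl | hw)
    · exact G.irrefl
    · exact (hnbr w hw).2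
    · exact fun h => (hnbr u hu).2 h.symm
    · exact hJ u hu w hw
  · intro I hI
    exact insert_erase (mem_filter.1 hI).2
  · intro J hJ
    exact erase_insert fun hv => ((mem_filter.1 hJ).2 v hv).1 rfl
  · intro I hI
    rw [← pow_succ', card_erase_add_one (mem_filter.1 hI).2]

end IndependentSets

def pathGraphCastLE {m n : ℕ} (h : m ≤ n) : pathGraph m ↪g pathGraph n where
  toEmbedding := Fin.castLEEmb h
  map_rel_iff' := by simp [pathGraph_adj]

theorem sum_indepFinsets_pathGraph_filter_eq_hcZ {m n : ℕ} (h : m ≤ n) (lam : ℝ)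
    {p : Finset (Fin n) → Prop} [DecidablePred p]
    (hp : ∀ J ∈ indepFinsets (pathGraph n), p J ↔ ∀ u ∈ J, u.val < m) :
    ∑ J ∈ (indepFinsets (pathGraph n)).filter p, lam ^ J.card = hcZ (pathGraph m) lam := by
  refine Eq.trans ?_ (sum_indepFinsets_subset_map (pathGraphCastLE h) lam)
  congr 1
  ext J
  simp only [mem_filter, and_congr_right_iff]
  intro hJ
  rw [hp J hJ, ← coe_subset, coe_map, coe_univ, Set.image_univ]
  change _ ↔ _ ⊆ Set.range (Fin.castLE h)
  rw [Fin.range_castLE]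
  rfl

theorem hcZ_pathGraph_add_two (n : ℕ) (lam : ℝ) :
    hcZ (pathGraph (n + 2)) lam = hcZ (pathGraph (n + 1)) lam + lam * hcZ (pathGraph n) lam := by
  rw [hcZ_eq_hcZout_add_hcZin (Fin.last (n + 1)), hcZin_eq_mul_sum_filter, hcZout,
    sum_indepFinsets_pathGraph_filter_eq_hcZ (Nat.le_succ _),
    sum_indepFinsets_pathGraph_filter_eq_hcZ (by omega : n ≤ n + 2)]
  · exact fun J _ => forall₂_congr fun u _ => by
      simp only [ne_eq, Fin.ext_iff, pathGraph_adj, Fin.val_last]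
      omega
  · exact fun J _ => ⟨fun h u hu => Fin.val_lt_last (ne_of_mem_of_not_mem hu h),
      fun h hlast => lt_irrefl _ (h _ hlast)⟩

theorem hcZ_pathGraph_zero (lam : ℝ) : hcZ (pathGraph 0) lam = 1 := by
  simp [hcZ, indepFinsets, Finset.univ_unique, Finset.eq_empty_of_isEmpty]

theorem hcZ_pathGraph_one (lam : ℝ) : hcZ (pathGraph 1) lam = 1 + lam := by
  rw [hcZ_eq_hcZout_add_hcZin 0, hcZin_eq_mul_sum_filter, hcZout,
    sum_indepFinsets_pathGraph_filter_eq_hcZ (Nat.zero_le 1),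
    sum_indepFinsets_pathGraph_filter_eq_hcZ (Nat.zero_le 1), hcZ_pathGraph_zero, mul_one]
  · exact fun J _ => by simp [Fin.forall_fin_one]
  · exact fun J _ => by simp [Fin.forall_fin_one]

theorem hcZ_pathGraph_mul_pow_eq_eval_U {x : ℝ} (hx : x ≠ 0) (n : ℕ) :
    hcZ (pathGraph n) (-1 / (4 * x ^ 2)) * (2 * x) ^ (n + 1) = (U ℝ (n + 1)).eval x := by
  induction n using Nat.twoStepInduction with
  | zero => simp [hcZ_pathGraph_zero, U_one]
  | one =>
    rw [hcZ_pathGraph_one, show ((1 : ℕ) : ℤ) + 1 = 2 by norm_num, U_two]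
    simp only [eval_sub, eval_mul, eval_pow, eval_X, eval_ofNat, eval_one]
    field_simp
    ring
  | more n ih₀ ih₁ =>
    have hU := U_add_two ℝ (n + 1)
    push_cast at ih₁ ⊢
    rw [show (n : ℤ) + 2 + 1 = n + 1 + 2 by ring, hU, hcZ_pathGraph_add_two]
    simp only [eval_sub, eval_mul, eval_ofNat, eval_X, ← ih₀, ← ih₁]
    field_simp
    ring

theorem hcZ_pathGraph_mul_pow_mul_sin (θ : ℝ) (hcos : cos θ ≠ 0) (n : ℕ) :
    hcZ (pathGraph n) (-1 / (4 * cos θ ^ 2)) * (2 * cos θ) ^ (n + 1) * sin θ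
      = sin ((n + 2) * θ) := by
  rw [hcZ_pathGraph_mul_pow_eq_eval_U hcos, U_real_cos]
  push_cast
  ring_nf

theorem Rat.three_le_den_of_pos_of_lt_half {q : ℚ} (hpos : 0 < q) (hlt : q < 1 / 2) :
    3 ≤ q.den := by
  have hnum : (1 : ℚ) ≤ q.num := by exact_mod_cast Rat.num_pos.2 hpos
  have hden : (2 : ℚ) < q.den := by
    nlinarith [q.mul_den_eq_num, (Nat.cast_pos.2 q.den_pos : (0 : ℚ) < q.den)]
  exact_mod_cast hden

theorem sin_den_mul_rat_mul_pi (q : ℚ) : sin (q.den * (q * π)) = 0 := by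
  rw [← mul_assoc, ← Rat.cast_natCast, ← Rat.cast_mul, Rat.den_mul_eq_num, Rat.cast_intCast,
    sin_int_mul_pi]

theorem path_partition_function_zero_general (lam : ℝ) (hbad : lam ∈ badSet) :
    ∃ n : ℕ, 1 ≤ n ∧ hcZ (SimpleGraph.pathGraph n) lam = 0 := by
  obtain ⟨θ, ⟨hθ₀, hθ₁⟩, ⟨q, rfl⟩, rfl⟩ := hbad
  have hq₀ : 0 < q := by
    rify
    exact pos_of_mul_pos_left hθ₀ pi_pos.le
  have hq₁ : q < 1 / 2 := by
    rify
    exact lt_of_mul_lt_mul_right (by linarith) pi_pos.le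
  have hden := Rat.three_le_den_of_pos_of_lt_half hq₀ hq₁
  have hcos : 0 < cos (q * π) := cos_pos_of_mem_Ioo ⟨by linarith, hθ₁⟩
  have hsin : 0 < sin (q * π) := sin_pos_of_pos_of_lt_pi hθ₀ (by linarith)
  refine ⟨q.den - 2, by omega, ?_⟩
  have key := hcZ_pathGraph_mul_pow_mul_sin _ hcos.ne' (q.den - 2)
  rw [Nat.cast_sub (by omega), Nat.cast_ofNat, sub_add_cancel, sin_den_mul_rat_mul_pi] at key
  simpa [hcos.ne', hsin.ne'] using key

/-- Let `λ < -1/4` with `λ ∈ B`. Then there is an integer `n ≥ 1` such that the hard-core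
partition function of the path with `n` vertices vanishes: `Z_{P_n}(λ) = 0`. -/
theorem path_partition_function_zero (lam : ℝ) (hlam : lam < -1/4) (hbad : lam ∈ badSet) :
    ∃ n : ℕ, 1 ≤ n ∧ hcZ (SimpleGraph.pathGraph n) lam = 0 :=
  path_partition_function_zero_general lam hbad
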